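/- The graph Yao(θ,2f+1) is an f-faulty-degree (1/(cos θ − sin θ))-spanner for S: for every edge set F of Yao(θ,2f+1) of maximum degree at most f and all p, q ∈ S, the shortest-path distance between p and q in Yao(θ,2f+1) \ F is at most (1/(cos θ − sin θ)) times the shortest-path distance between p and q in K_S \ F. -/

import Mathlib

open Real

/-- Length of a walk in a graph whose vertices lie in a metric space:
the sum of the metric distances of consecutive vertices. -/
noncomputable def wlen {V : Type*} [PseudoMetricSpace V] {G : SimpleGraph V} {u v : V}
    (w : G.Walk u v) : ℝ :=
  (w.darts.map fun d : G.Dart => dist d.toProd.1 d.toProd.2).sum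

/-- Shortest-path distance between two vertices of a metrically weighted graph. -/
noncomputable def gdist {V : Type*} [PseudoMetricSpace V] (G : SimpleGraph V) (p q : V) : ℝ :=
  sInf {l : ℝ | ∃ w : G.Walk p q, wlen w = l}

/-- The set `F` of edges, viewed as a graph, has maximum degree at most `f`. -/
def maxDegLe {V : Type*} (F : Set (Sym2 V)) (f : ℕ) : Prop :=
  ∀ v : V, {e | e ∈ F ∧ v ∈ e}.encard ≤ (f : ℕ∞)

/-- The set of points of `S`, as a type. -/
abbrev Pts {d : ℕ} (S : Finset (EuclideanSpace ℝ (Fin d))) : Type :=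
  {x : EuclideanSpace ℝ (Fin d) // x ∈ S}

/-!
Every edge `pq` of `K_S \ F` is replaced by a path of `Yao \ F` of length at most
`|pq| / (cos θ - sin θ)`. Let `C` be the cone containing `q - p`. If `q` is a Yao neighbour of `p`
in `C`, put `r = q`. Otherwise `p` has `2f + 1` Yao neighbours in `C`, all at least as close to `p`
as `q`; since `F` has maximum degree `f`, at most `2f` of them are cut off by `F` from `p` or from
`q`, and `r` is one of the others. The angle at `p` is at most `θ` and `|pr| ≤ |pq|`, so
`|rq| ≤ |pq| - (cos θ - sin θ) |pr|`, and induction on `|pq|` over the finitely many pairs gives a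
path `p → r ⇝ q` of length at most `|pr| + |rq| / (cos θ - sin θ) ≤ |pq| / (cos θ - sin θ)`.
-/

open EuclideanGeometry

theorem EuclideanGeometry.dist_le_dist_sub_mul_dist_of_angle_le {E : Type*}
    [NormedAddCommGroup E] [InnerProductSpace ℝ E] {p q r : E} {θ : ℝ} (hθ0 : 0 ≤ θ)
    (hθπ : θ ≤ π) (hangle : ∠ r p q ≤ θ) (hpr : dist p r ≤ dist p q) :
    dist r q ≤ dist p q - (cos θ - sin θ) * dist p r := by
  set a := r - p
  set b := q - p
  have ha : dist p r = ‖a‖ := dist_eq_norm' p r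
  have hb : dist p q = ‖b‖ := dist_eq_norm' p q
  have hab : dist r q = ‖b - a‖ := by rw [dist_eq_norm', sub_sub_sub_cancel_right]
  rw [ha, hb] at hpr ⊢
  rw [hab]
  have hinner : cos θ * (‖a‖ * ‖b‖) ≤ inner ℝ a b := by
    rw [← InnerProductGeometry.cos_angle_mul_norm_mul_norm]
    gcongr
    exact cos_le_cos_of_nonneg_of_le_pi (InnerProductGeometry.angle_nonneg a b) hθπ hangle
  have hsin : 0 ≤ sin θ := sin_nonneg_of_nonneg_of_le_pi hθ0 hθπ
  have hcos : cos θ ≤ 1 := cos_le_one θ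
  have hsq : ‖b - a‖ ^ 2 = ‖b‖ ^ 2 - 2 * inner ℝ a b + ‖a‖ ^ 2 := by
    rw [norm_sub_sq_real, real_inner_comm]
  -- the gap between the squares is `2 sin θ ‖a‖ (‖b‖ - cos θ ‖a‖) ≥ 0`
  have hgap : 0 ≤ sin θ * ‖a‖ * (‖b‖ - cos θ * ‖a‖) := by
    have : cos θ * ‖a‖ ≤ ‖b‖ := by nlinarith [norm_nonneg a]
    exact mul_nonneg (mul_nonneg hsin (norm_nonneg a)) (by linarith)
  have hrhs : 0 ≤ ‖b‖ - (cos θ - sin θ) * ‖a‖ := by nlinarith [norm_nonneg a]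
  refine (pow_le_pow_iff_left₀ (norm_nonneg _) hrhs two_ne_zero).mp ?_
  nlinarith [sin_sq_add_cos_sq θ]

section WalkLength

variable {V : Type*} [PseudoMetricSpace V] {G H : SimpleGraph V}

@[simp]
lemma wlen_nil {u : V} : wlen (SimpleGraph.Walk.nil : G.Walk u u) = 0 := by
  simp [wlen]

@[simp]
lemma wlen_cons {u v x : V} (h : G.Adj u v) (w : G.Walk v x) :
    wlen (SimpleGraph.Walk.cons h w) = dist u v + wlen w := by
  simp [wlen]

lemma wlen_append {u v x : V} (w₁ : G.Walk u v) (w₂ : G.Walk v x) :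
    wlen (w₁.append w₂) = wlen w₁ + wlen w₂ := by
  simp [wlen]

lemma wlen_nonneg {u v : V} (w : G.Walk u v) : 0 ≤ wlen w :=
  List.sum_nonneg fun _ hx => by
    obtain ⟨_, _, rfl⟩ := List.mem_map.mp hx
    exact dist_nonneg

lemma exists_walk_wlen_le_mul_wlen {t : ℝ}
    (h : ∀ u v, H.Adj u v → ∃ w : G.Walk u v, wlen w ≤ t * dist u v) :
    ∀ {u v : V} (w : H.Walk u v), ∃ w' : G.Walk u v, wlen w' ≤ t * wlen w
  | _, _, .nil => ⟨.nil, by simp⟩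
  | _, _, .cons hadj w => by
    obtain ⟨w₁, hw₁⟩ := h _ _ hadj
    obtain ⟨w₂, hw₂⟩ := exists_walk_wlen_le_mul_wlen h w
    exact ⟨w₁.append w₂, by rw [wlen_append, wlen_cons, mul_add]; exact add_le_add hw₁ hw₂⟩

theorem gdist_le_mul_gdist (hGH : G ≤ H) {t : ℝ} (ht : 0 ≤ t)
    (h : ∀ u v, H.Adj u v → ∃ w : G.Walk u v, wlen w ≤ t * dist u v) (p q : V) :
    gdist G p q ≤ t * gdist H p q := by
  unfold gdist
  rw [← smul_eq_mul, ← Real.sInf_smul_of_nonneg ht]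
  rcases Set.eq_empty_or_nonempty {l | ∃ w : H.Walk p q, wlen w = l} with hH | hH
  · have hG : {l | ∃ w : G.Walk p q, wlen w = l} = ∅ :=
      Set.eq_empty_of_forall_notMem fun _ ⟨w, _⟩ => hH.subset ⟨w.mapLe hGH, rfl⟩
    rw [hH, hG, Set.smul_set_empty]
  · refine le_csInf hH.smul_set ?_
    rintro _ ⟨_, ⟨w, rfl⟩, rfl⟩
    obtain ⟨w', hw'⟩ := exists_walk_wlen_le_mul_wlen h w
    have hbdd : BddBelow {l | ∃ w : G.Walk p q, wlen w = l} := by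
      refine ⟨0, ?_⟩
      rintro _ ⟨w, rfl⟩
      exact wlen_nonneg w
    exact (csInf_le hbdd ⟨w', rfl⟩).trans hw'

end WalkLength

theorem exists_walk_wlen_le_of_forall_exists_adj {V : Type*} [MetricSpace V] [Finite V]
    {G : SimpleGraph V} {P : V → V → Prop} {c : ℝ} (hc : 0 < c)
    (hstep : ∀ p q, p ≠ q → P p q → ∃ r, G.Adj p r ∧ P r q ∧ dist r q ≤ dist p q - c * dist p r)
    (p q : V) (hpq : P p q) : ∃ w : G.Walk p q, wlen w ≤ c⁻¹ * dist p q := by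
  let shorter : V × V → V × V → Prop := fun x y => dist x.1 x.2 < dist y.1 y.2
  have : IsTrans _ shorter := ⟨fun _ _ _ => lt_trans⟩
  have : Std.Irrefl shorter := ⟨fun _ => lt_irrefl _⟩
  suffices ∀ x : V × V, P x.1 x.2 → ∃ w : G.Walk x.1 x.2, wlen w ≤ c⁻¹ * dist x.1 x.2 from
    this (p, q) hpq
  intro x
  induction x using (Finite.wellFounded_of_trans_of_irrefl shorter).induction with
  | _ x ih =>
  obtain ⟨p, q⟩ := x
  intro hPpq
  rcases eq_or_ne p q with rfl | hpq
  · exact ⟨.nil, by simp⟩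
  obtain ⟨r, hpr, hPrq, hdist⟩ := hstep p q hpq hPpq
  have hpr_pos : 0 < dist p r := dist_pos.mpr hpr.ne
  obtain ⟨w, hw⟩ := ih (r, q) (by dsimp [shorter]; nlinarith) hPrq
  refine ⟨.cons hpr w, ?_⟩
  calc wlen (.cons hpr w) = dist p r + wlen w := wlen_cons hpr w
    _ ≤ dist p r + c⁻¹ * (dist p q - c * dist p r) := by gcongr; exact hw.trans (by gcongr)
    _ = c⁻¹ * dist p q := by field_simp; ring

lemma Set.ncard_eq_of_ncard_eq_min {α : Type*} {A N : Set α} {m : ℕ} (hA : A.Finite)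
    (hNA : N ⊆ A) (hN : N.ncard = min m A.ncard) {x : α} (hxA : x ∈ A) (hxN : x ∉ N) :
    N.ncard = m := by
  rcases le_total m A.ncard with h | h
  · rwa [min_eq_left h] at hN
  · rw [min_eq_right h] at hN
    exact absurd (Set.eq_of_subset_of_ncard_le hNA hN.ge hA ▸ hxA) hxN

section MaxDegree

variable {V : Type*} {F : Set (Sym2 V)} {f : ℕ}

lemma encard_setOf_mk_mem_le (hF : maxDegLe F f) (p : V) : {r | s(p, r) ∈ F}.encard ≤ f :=
  (Set.encard_le_encard_of_injOn (f := fun r => s(p, r)) (t := {e | e ∈ F ∧ p ∈ e})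
    (fun r hr => ⟨hr, Sym2.mem_mk_left p r⟩) (fun _ _ _ _ h => Sym2.congr_right.mp h)).trans (hF p)

lemma exists_mk_notMem_of_maxDegLe (hF : maxDegLe F f) (p q : V) {T : Set V}
    (hT : 2 * (f : ℕ∞) < T.encard) : ∃ r ∈ T, s(p, r) ∉ F ∧ s(r, q) ∉ F := by
  by_contra! h
  have hT_sub : T ⊆ {r | s(p, r) ∈ F} ∪ {r | s(q, r) ∈ F} := by
    intro r hr
    by_cases hpr : s(p, r) ∈ F
    · exact .inl hpr
    · exact .inr (by simpa [Sym2.eq_swap] using h r hr hpr)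
  have := (Set.encard_le_encard hT_sub).trans (Set.encard_union_le _ _)
  have := add_le_add (encard_setOf_mk_mem_le hF p) (encard_setOf_mk_mem_le hF q)
  rw [← two_mul] at this
  exact hT.not_ge (by order)

end MaxDegree

theorem yao_exists_adj_dist_le {d k f : ℕ} {θ : ℝ} (hθ0 : 0 ≤ θ) (hθπ : θ ≤ π)
    (cone : Fin k → Set (EuclideanSpace ℝ (Fin d)))
    (hang : ∀ i, ∀ x ∈ cone i, x ≠ 0 → ∀ y ∈ cone i, y ≠ 0 →
      InnerProductGeometry.angle x y ≤ θ)
    (hcover : ∀ x : EuclideanSpace ℝ (Fin d), ∃ i, x ∈ cone i)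
    (S : Finset (EuclideanSpace ℝ (Fin d)))
    (N : Pts S → Fin k → Set (EuclideanSpace ℝ (Fin d)))
    (hNsub : ∀ p i, N p i ⊆ {x | x ∈ S ∧ x ≠ ↑p ∧ x - ↑p ∈ cone i})
    (hNcard : ∀ p i, (N p i).ncard =
      min (2 * f + 1) {x | x ∈ S ∧ x ≠ ↑p ∧ x - ↑p ∈ cone i}.ncard)
    (hNclose : ∀ p i, ∀ r ∈ N p i, ∀ x : EuclideanSpace ℝ (Fin d),
      x ∈ S → x ≠ ↑p → x - ↑p ∈ cone i → x ∉ N p i →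
      dist (↑p : EuclideanSpace ℝ (Fin d)) r ≤ dist (↑p : EuclideanSpace ℝ (Fin d)) x)
    (Yao : SimpleGraph (Pts S))
    (hYao : ∀ x y : Pts S, Yao.Adj x y ↔ x ≠ y ∧ ∃ i, (↑y ∈ N x i ∨ ↑x ∈ N y i))
    (F : Set (Sym2 (Pts S))) (hF : F ⊆ Yao.edgeSet) (hdeg : maxDegLe F f)
    (p q : Pts S) (hpq : p ≠ q) (hpqF : s(p, q) ∉ F) :
    ∃ r, (Yao.deleteEdges F).Adj p r ∧ s(r, q) ∉ F ∧
      dist r q ≤ dist p q - (cos θ - sin θ) * dist p r := by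
  obtain ⟨i, hi⟩ := hcover (q - p : EuclideanSpace ℝ (Fin d))
  have hqp : (q : EuclideanSpace ℝ (Fin d)) ≠ p := fun h => hpq (Subtype.ext h).symm
  obtain ⟨r, hrN, hprF, hrqF, hpr⟩ : ∃ r : Pts S, ↑r ∈ N p i ∧ s(p, r) ∉ F ∧ s(r, q) ∉ F ∧
      dist p r ≤ dist p q := by
    by_cases hqN : ↑q ∈ N p i
    · exact ⟨q, hqN, hpqF, fun h => (hF h : Yao.Adj q q).ne rfl, le_rfl⟩
    have hcard := Set.ncard_eq_of_ncard_eq_min (S.finite_toSet.subset fun _ hx => hx.1)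
      (hNsub p i) (hNcard p i) ⟨q.2, hqp, hi⟩ hqN
    have hT : 2 * (f : ℕ∞) < (Subtype.val ⁻¹' N p i : Set (Pts S)).encard := by
      rw [Set.encard_preimage_of_injective_subset_range Subtype.val_injective
        (fun x hx => ⟨⟨x, (hNsub p i hx).1⟩, rfl⟩),
        ← (S.finite_toSet.subset fun _ hx => (hNsub p i hx).1).cast_ncard_eq, hcard]
      norm_cast
      omega
    obtain ⟨r, hrN, hprF, hrqF⟩ := exists_mk_notMem_of_maxDegLe hdeg p q hT
    exact ⟨r, hrN, hprF, hrqF, hNclose p i r hrN q q.2 hqp hi hqN⟩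
  have hrp : (r : EuclideanSpace ℝ (Fin d)) ≠ p := (hNsub p i hrN).2.1
  have hadj : Yao.Adj p r := (hYao p r).2 ⟨fun h => hrp (congrArg _ h).symm, i, .inl hrN⟩
  refine ⟨r, (Yao.deleteEdges_adj ..).2 ⟨hadj, hprF⟩, hrqF, ?_⟩
  exact dist_le_dist_sub_mul_dist_of_angle_le hθ0 hθπ
    (hang i _ (hNsub p i hrN).2.2 (sub_ne_zero.mpr hrp) _ hi (sub_ne_zero.mpr hqp)) hpr

theorem stmt15_general {d k : ℕ} (f : ℕ) (θ : ℝ) (hθ0 : 0 < θ) (hθ1 : θ < π / 4)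
    -- a collection of k cones with apex at the origin, angular diameter at most θ,
    -- covering ℝ^d
    (cone : Fin k → Set (EuclideanSpace ℝ (Fin d)))
    (hang : ∀ i, ∀ x ∈ cone i, x ≠ 0 → ∀ y ∈ cone i, y ≠ 0 →
      InnerProductGeometry.angle x y ≤ θ)
    (hcover : ∀ x : EuclideanSpace ℝ (Fin d), ∃ i, x ∈ cone i)
    (S : Finset (EuclideanSpace ℝ (Fin d)))
    -- for each p and each cone, N p i is the set of min(2f+1, |S_{p,C}|) points of
    -- S_{p,C} that are closest to p in Euclidean distance
    (N : Pts S → Fin k → Set (EuclideanSpace ℝ (Fin d)))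
    (hNsub : ∀ p i, N p i ⊆ {x | x ∈ S ∧ x ≠ ↑p ∧ x - ↑p ∈ cone i})
    (hNcard : ∀ p i, (N p i).ncard =
      min (2 * f + 1) {x | x ∈ S ∧ x ≠ ↑p ∧ x - ↑p ∈ cone i}.ncard)
    (hNclose : ∀ p i, ∀ r ∈ N p i, ∀ x : EuclideanSpace ℝ (Fin d),
      x ∈ S → x ≠ ↑p → x - ↑p ∈ cone i → x ∉ N p i →
      dist (↑p : EuclideanSpace ℝ (Fin d)) r ≤ dist (↑p : EuclideanSpace ℝ (Fin d)) x)
    -- the graph Yao(θ, 2f+1)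
    (Yao : SimpleGraph (Pts S))
    (hYao : ∀ x y : Pts S, Yao.Adj x y ↔ x ≠ y ∧ ∃ i, (↑y ∈ N x i ∨ ↑x ∈ N y i)) :
    ∀ F : Set (Sym2 (Pts S)), F ⊆ Yao.edgeSet → maxDegLe F f →
      ∀ p q : Pts S, gdist (Yao.deleteEdges F) p q ≤
        (1 / (Real.cos θ - Real.sin θ)) *
          gdist ((⊤ : SimpleGraph (Pts S)).deleteEdges F) p q := by
  intro F hF hdeg p q
  have hsin_lt_cos : sin θ < cos θ := by
    rw [← sin_pi_div_two_sub]
    exact sin_lt_sin_of_lt_of_le_pi_div_two (by linarith) (by linarith) (by linarith)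
  have hc : 0 < cos θ - sin θ := sub_pos.mpr hsin_lt_cos
  rw [one_div]
  refine gdist_le_mul_gdist (SimpleGraph.deleteEdges_mono le_top) (inv_nonneg.mpr hc.le)
    (fun u v huv => ?_) p q
  exact exists_walk_wlen_le_of_forall_exists_adj hc
    (yao_exists_adj_dist_le hθ0.le (by linarith [pi_pos]) cone hang hcover S N hNsub hNcard
      hNclose Yao hYao F hF hdeg) u v ((SimpleGraph.deleteEdges_adj ..).mp huv).2

theorem stmt15 {d k : ℕ} (f : ℕ) (θ : ℝ) (hθ0 : 0 < θ) (hθ1 : θ < π / 4)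
    -- a collection of k cones with apex at the origin, angular diameter at most θ,
    -- covering ℝ^d
    (cone : Fin k → Set (EuclideanSpace ℝ (Fin d)))
    (hcone : ∀ i, ∀ x ∈ cone i, ∀ t : ℝ, 0 ≤ t → t • x ∈ cone i)
    (hang : ∀ i, ∀ x ∈ cone i, x ≠ 0 → ∀ y ∈ cone i, y ≠ 0 →
      InnerProductGeometry.angle x y ≤ θ)
    (hcover : ∀ x : EuclideanSpace ℝ (Fin d), ∃ i, x ∈ cone i)
    (S : Finset (EuclideanSpace ℝ (Fin d)))
    -- for each p and each cone, N p i is the set of min(2f+1, |S_{p,C}|) points of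
    -- S_{p,C} that are closest to p in Euclidean distance
    (N : Pts S → Fin k → Set (EuclideanSpace ℝ (Fin d)))
    (hNsub : ∀ p i, N p i ⊆ {x | x ∈ S ∧ x ≠ ↑p ∧ x - ↑p ∈ cone i})
    (hNcard : ∀ p i, (N p i).ncard =
      min (2 * f + 1) {x | x ∈ S ∧ x ≠ ↑p ∧ x - ↑p ∈ cone i}.ncard)
    (hNclose : ∀ p i, ∀ r ∈ N p i, ∀ x : EuclideanSpace ℝ (Fin d),
      x ∈ S → x ≠ ↑p → x - ↑p ∈ cone i → x ∉ N p i →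
      dist (↑p : EuclideanSpace ℝ (Fin d)) r ≤ dist (↑p : EuclideanSpace ℝ (Fin d)) x)
    -- the graph Yao(θ, 2f+1)
    (Yao : SimpleGraph (Pts S))
    (hYao : ∀ x y : Pts S, Yao.Adj x y ↔ x ≠ y ∧ ∃ i, (↑y ∈ N x i ∨ ↑x ∈ N y i)) :
    ∀ F : Set (Sym2 (Pts S)), F ⊆ Yao.edgeSet → maxDegLe F f →
      ∀ p q : Pts S, gdist (Yao.deleteEdges F) p q ≤
        (1 / (Real.cos θ - Real.sin θ)) *
          gdist ((⊤ : SimpleGraph (Pts S)).deleteEdges F) p q :=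
  stmt15_general f θ hθ0 hθ1 cone hang hcover S N hNsub hNcard hNclose Yao hYao
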